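/- arXiv:2402.09295 — 4 statements merged into one kernel-verified Lean document; each statement's English description precedes it below -/
import Mathlib

section
/- Let β ∈ (0, 1) and γ ∈ ℝ, and let λ be the value returned by the adaptive γ-safeguarding case analysis: λ = 0 if γ = 0 or γ ≥ 1; λ = β/(γ(β + sign(γ))) if γ < 1, γ ≠ 0 and |γ|/|1 − γ| > β; and λ = 1 otherwise. Then the scaled coefficient satisfies |λγ| ≤ β·|1 − λγ|; that is, after safeguarding, the ratio |λγ|/|1 − λγ| is at most β. -/
/-! The scaling `λ = β / (γ (β + sign γ))` makes `λγ = β / (β + s)` with `|s| = 1`, so that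
`1 - λγ = s / (β + s)` and the safeguarding criterion holds with equality. In the remaining
cases either `λγ = 0` or the criterion already holds for `λ = 1`. -/

lemma abs_div_add_eq_mul_abs_one_sub {β s : ℝ} (hβ : 0 ≤ β) (hs : |s| = 1) (hβs : β + s ≠ 0) :
    |β / (β + s)| = β * |1 - β / (β + s)| := by
  have hcompl : 1 - β / (β + s) = s / (β + s) := by
    field_simp
    ring
  rw [hcompl, abs_div, abs_div, hs, abs_of_nonneg hβ, mul_one_div]

lemma abs_sign_of_ne_zero {r : ℝ} (hr : r ≠ 0) : |Real.sign r| = 1 := by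
  rcases Real.sign_apply_eq_of_ne_zero r hr with h | h <;> simp [h]

lemma abs_safeguarded_mul_eq {β γ : ℝ} (hβ : β ∈ Set.Ioo (0 : ℝ) 1) (hγ : γ ≠ 0) :
    |β / (γ * (β + Real.sign γ)) * γ| = β * |1 - β / (γ * (β + Real.sign γ)) * γ| := by
  have hβs : β + Real.sign γ ≠ 0 := by
    rcases Real.sign_apply_eq_of_ne_zero γ hγ with h | h <;> rw [h] <;>
      linarith [hβ.1, hβ.2]
  have hscaled : β / (γ * (β + Real.sign γ)) * γ = β / (β + Real.sign γ) := by
    field_simp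
  rw [hscaled]
  exact abs_div_add_eq_mul_abs_one_sub hβ.1.le (abs_sign_of_ne_zero hγ) hβs

/-- Let `β ∈ (0,1)` and `γ ∈ ℝ`, and let `λ` be the value returned by the
adaptive γ-safeguarding case analysis: `λ = 0` if `γ = 0` or `γ ≥ 1`;
`λ = β/(γ(β + sign γ))` if `γ < 1`, `γ ≠ 0` and `|γ|/|1 − γ| > β`; and `λ = 1` otherwise.
Then `|λγ| ≤ β·|1 − λγ|`, i.e. after safeguarding the ratio `|λγ|/|1 − λγ|` is at most `β`. -/
theorem stmt_7 (β γ lam : ℝ)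
    (hβ : β ∈ Set.Ioo (0 : ℝ) 1)
    (hlam : lam = if γ = 0 ∨ 1 ≤ γ then 0
      else if β < |γ| / |1 - γ| then β / (γ * (β + Real.sign γ))
      else 1) :
    |lam * γ| ≤ β * |1 - lam * γ| := by
  subst hlam
  split_ifs with hdegenerate hratio
  · simpa using hβ.1.le
  · push Not at hdegenerate
    exact (abs_safeguarded_mul_eq hβ hdegenerate.1).le
  · push Not at hdegenerate hratio
    rw [one_mul]
    exact (div_le_iff₀ (abs_pos.2 (sub_ne_zero.2 hdegenerate.2.ne'))).1 hratio
end

section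
/- Let f : ℝⁿ → ℝⁿ be C³ with f(x*) = 0 and f'(x*) nonsingular. Then there exist ρ > 0 and a constant C depending only on f such that for any x_k, x_{k−1} ∈ B_ρ(x*) with η_{k+1} = ‖w_{k+1}‖/‖w_k‖ < 1, if λ_{k+1} is computed by adaptive γ-safeguarding with parameter r̂ ∈ (0,1) and β_{k+1} = min{η_{k+1}, r̂}·η_{k+1}, then the adaptively safeguarded Newton–Anderson iterate x_{k+1}^{NA} = x_k + w_{k+1} − λ_{k+1}γ_{k+1}(x_k − x_{k−1} + w_{k+1} − w_k) and the Newton iterate x_{k+1}^{Newt} = x_k + w_{k+1} satisfy: ‖x_{k+1}^{NA} − x_{k+1}^{Newt}‖ ≤ C·(β_{k+1}/(1 − β_{k+1}))·max{‖e_k‖², ‖e_{k−1}‖²} when λ_{k+1} = 1, and ‖x_{k+1}^{NA} − x_{k+1}^{Newt}‖ ≤ C·(β_{k+1}/(1 + sign(γ_{k+1})β_{k+1}))·max{‖e_k‖², ‖e_{k−1}‖²} when λ_{k+1} < 1. -/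
open scoped RealInnerProductSpace

lemma newton_key (n : ℕ) (f : EuclideanSpace ℝ (Fin n) → EuclideanSpace ℝ (Fin n))
    (xstar : EuclideanSpace ℝ (Fin n))
    (hf : ContDiff ℝ 3 f) (hfxs : f xstar = 0)
    (hinv : Function.Bijective (fderiv ℝ f xstar)) :
    ∃ ρ > (0 : ℝ), ∃ M : ℝ, 0 ≤ M ∧ ∀ x ∈ Metric.ball xstar ρ,
      ∀ w, fderiv ℝ f x w = -f x → ‖w + (x - xstar)‖ ≤ M * ‖x - xstar‖ ^ 2 := by
  classical
  set A := fderiv ℝ f xstar with hA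
  let e : EuclideanSpace ℝ (Fin n) ≃ₗ[ℝ] EuclideanSpace ℝ (Fin n) :=
    LinearEquiv.ofBijective A.toLinearMap hinv
  let E := e.toContinuousLinearEquiv
  set K : ℝ := ‖E.symm.toContinuousLinearMap‖ + 1 with hKdef
  have hK0 : 0 < K := by positivity
  have hEA : ∀ u, E u = A u := fun u => rfl
  have hKle : ∀ u, ‖u‖ ≤ K * ‖A u‖ := by
    intro u
    have h1 : ‖E.symm.toContinuousLinearMap (A u)‖ ≤ ‖E.symm.toContinuousLinearMap‖ * ‖A u‖ :=
      E.symm.toContinuousLinearMap.le_opNorm _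
    have h2 : E.symm.toContinuousLinearMap (A u) = u := by
      rw [← hEA u]; exact E.symm_apply_apply u
    rw [h2] at h1
    nlinarith [norm_nonneg (A u)]
  -- continuity of fderiv
  have hc : Continuous (fderiv ℝ f) := hf.continuous_fderiv (by norm_num)
  have hca : ContinuousAt (fderiv ℝ f) xstar := hc.continuousAt
  rw [Metric.continuousAt_iff] at hca
  obtain ⟨δ, hδ0, hδ⟩ := hca (1 / (2 * K)) (by positivity)
  -- Lipschitz of fderiv near xstar
  have hf1 : ContDiff ℝ 1 (fderiv ℝ f) := hf.fderiv_right (by norm_num)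
  obtain ⟨K₂, t, ht, hlip⟩ := (hf1.contDiffAt (x := xstar)).exists_lipschitzOnWith
  obtain ⟨ε, hε0, hεt⟩ := Metric.mem_nhds_iff.mp ht
  refine ⟨min δ ε, lt_min hδ0 hε0, 2 * K * K₂, by positivity, ?_⟩
  intro x hx w hw
  have hxball : x ∈ Metric.ball xstar (min δ ε) := hx
  have hxδ : dist x xstar < δ := lt_of_lt_of_le (Metric.mem_ball.mp hx) (min_le_left _ _)
  have hxε : Metric.ball xstar (min δ ε) ⊆ t :=
    (Metric.ball_subset_ball (min_le_right _ _)).trans hεt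
  have hseg : segment ℝ xstar x ⊆ Metric.ball xstar (min δ ε) :=
    (convex_ball _ _).segment_subset (Metric.mem_ball_self (lt_min hδ0 hε0)) hx
  -- Taylor bound
  have htaylor : ‖f x - f xstar - (fderiv ℝ f x) (x - xstar)‖
      ≤ (K₂ * ‖x - xstar‖) * ‖x - xstar‖ := by
    refine (convex_segment xstar x).norm_image_sub_le_of_norm_fderiv_le'
      (fun z hz => (hf.differentiable (by norm_num)).differentiableAt)
      (fun z hz => ?_) (left_mem_segment ℝ xstar x) (right_mem_segment ℝ xstar x)
    have hzt : z ∈ t := hxε (hseg hz)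
    have hxt : x ∈ t := hxε hx
    have hdzx : dist z x ≤ ‖x - xstar‖ := by
      have hsub : segment ℝ xstar x ⊆ Metric.closedBall x (dist xstar x) :=
        (convex_closedBall x (dist xstar x)).segment_subset
          (Metric.mem_closedBall.mpr le_rfl)
          (Metric.mem_closedBall_self dist_nonneg)
      have h := Metric.mem_closedBall.mp (hsub hz)
      calc dist z x ≤ dist xstar x := h
        _ = ‖x - xstar‖ := by rw [dist_eq_norm, norm_sub_rev]
    have := hlip.dist_le_mul z hzt x hxt
    rw [dist_eq_norm] at this
    calc ‖fderiv ℝ f z - fderiv ℝ f x‖ ≤ K₂ * dist z x := this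
      _ ≤ K₂ * ‖x - xstar‖ := by
          exact mul_le_mul_of_nonneg_left hdzx K₂.coe_nonneg
  -- combine
  set u := w + (x - xstar) with hu
  have hfu : fderiv ℝ f x u = -(f x - f xstar - (fderiv ℝ f x) (x - xstar)) := by
    rw [hu, map_add, hw, hfxs]
    abel
  have hfu_norm : ‖fderiv ℝ f x u‖ ≤ K₂ * ‖x - xstar‖ ^ 2 := by
    rw [hfu, norm_neg]
    calc ‖f x - f xstar - (fderiv ℝ f x) (x - xstar)‖
        ≤ (K₂ * ‖x - xstar‖) * ‖x - xstar‖ := htaylor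
      _ = K₂ * ‖x - xstar‖ ^ 2 := by ring
  -- lower bound
  have hpert : ‖A u - fderiv ℝ f x u‖ ≤ (1 / (2 * K)) * ‖u‖ := by
    have h1 : ‖A - fderiv ℝ f x‖ ≤ 1 / (2 * K) := by
      have := hδ hxδ
      rw [dist_eq_norm, norm_sub_rev] at this
      exact this.le
    calc ‖A u - fderiv ℝ f x u‖ = ‖(A - fderiv ℝ f x) u‖ := by simp
      _ ≤ ‖A - fderiv ℝ f x‖ * ‖u‖ := (A - fderiv ℝ f x).le_opNorm u
      _ ≤ (1 / (2 * K)) * ‖u‖ := mul_le_mul_of_nonneg_right h1 (norm_nonneg u)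
  have hlow : ‖u‖ ≤ 2 * (K * ‖fderiv ℝ f x u‖) := by
    have h1 := hKle u
    have h2 : ‖A u‖ ≤ ‖fderiv ℝ f x u‖ + ‖A u - fderiv ℝ f x u‖ := by
      have := norm_sub_norm_le (A u) (fderiv ℝ f x u)
      nlinarith [norm_nonneg (A u - fderiv ℝ f x u)]
    have h3 := hpert
    have hK' : (0:ℝ) < 2 * K := by positivity
    have : ‖u‖ ≤ K * ‖fderiv ℝ f x u‖ + (1/2) * ‖u‖ := by
      calc ‖u‖ ≤ K * ‖A u‖ := h1
        _ ≤ K * (‖fderiv ℝ f x u‖ + ‖A u - fderiv ℝ f x u‖) :=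
            mul_le_mul_of_nonneg_left h2 hK0.le
        _ ≤ K * (‖fderiv ℝ f x u‖ + (1 / (2 * K)) * ‖u‖) := by
            have := mul_le_mul_of_nonneg_left h3 hK0.le
            nlinarith
        _ = K * ‖fderiv ℝ f x u‖ + (1/2) * ‖u‖ := by
            field_simp
    set a := K * ‖fderiv ℝ f x u‖ with ha
    set b := ‖u‖ with hb
    linarith
  calc ‖u‖ ≤ 2 * (K * ‖fderiv ℝ f x u‖) := hlow
    _ = 2 * K * ‖fderiv ℝ f x u‖ := by ring
    _ ≤ 2 * K * (K₂ * ‖x - xstar‖ ^ 2) := by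
        exact mul_le_mul_of_nonneg_left hfu_norm (by positivity)
    _ = 2 * K * K₂ * ‖x - xstar‖ ^ 2 := by ring

set_option maxHeartbeats 1000000 in
/-- Theorem 3.4: Let `f : ℝⁿ → ℝⁿ` be `C³` with `f x* = 0` and `f'(x*)`
nonsingular.  There exist `ρ > 0` and a constant `C` depending only on `f` such that for
`x_k, x_{k-1} ∈ B_ρ(x*)` with `η_{k+1} = ‖w_{k+1}‖/‖w_k‖ < 1`, if `λ_{k+1}` is computed by
adaptive γ-safeguarding with parameter `r̂ ∈ (0,1)` and `β_{k+1} = min{η_{k+1}, r̂}·η_{k+1}`,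
then `‖x_{k+1}^{NA} − x_{k+1}^{Newt}‖ ≤ C (β_{k+1}/(1 − β_{k+1})) max{‖e_k‖², ‖e_{k-1}‖²}`
when `λ_{k+1} = 1`, and
`‖x_{k+1}^{NA} − x_{k+1}^{Newt}‖ ≤ C (β_{k+1}/(1 + sign(γ_{k+1}) β_{k+1})) max{‖e_k‖², ‖e_{k-1}‖²}`
when `λ_{k+1} < 1`. -/
theorem stmt_9 (n : ℕ) (f : EuclideanSpace ℝ (Fin n) → EuclideanSpace ℝ (Fin n))
    (xstar : EuclideanSpace ℝ (Fin n))
    (hf : ContDiff ℝ 3 f) (hfxs : f xstar = 0)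
    (hinv : Function.Bijective (fderiv ℝ f xstar))
    (rhat : ℝ) (hrhat : rhat ∈ Set.Ioo (0 : ℝ) 1) :
    ∃ ρ > (0 : ℝ), ∃ C : ℝ, ∀ xk xk1 wk1 wk : EuclideanSpace ℝ (Fin n),
      xk ∈ Metric.ball xstar ρ → xk1 ∈ Metric.ball xstar ρ →
      -- Newton updates
      fderiv ℝ f xk wk1 = -f xk →
      fderiv ℝ f xk1 wk = -f xk1 →
      -- η_{k+1} < 1
      ‖wk1‖ / ‖wk‖ < 1 →
      ∀ γ η β lam : ℝ,
        γ = ⟪wk1 - wk, wk1⟫ / ‖wk1 - wk‖ ^ 2 →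
        η = ‖wk1‖ / ‖wk‖ →
        β = min η rhat * η →
        lam = (if γ = 0 ∨ 1 ≤ γ then 0
          else if β < |γ| / |1 - γ| then β / (γ * (β + Real.sign γ))
          else 1) →
        ((lam = 1 →
          ‖(xk + wk1 - (lam * γ) • (xk - xk1 + wk1 - wk)) - (xk + wk1)‖ ≤
            C * (β / (1 - β)) * max (‖xk - xstar‖ ^ 2) (‖xk1 - xstar‖ ^ 2)) ∧
        (lam < 1 →
          ‖(xk + wk1 - (lam * γ) • (xk - xk1 + wk1 - wk)) - (xk + wk1)‖ ≤
            C * (β / (1 + Real.sign γ * β)) * max (‖xk - xstar‖ ^ 2) (‖xk1 - xstar‖ ^ 2))) := by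
  obtain ⟨hr0, hr1⟩ := hrhat
  obtain ⟨ρ, hρ, M, hM0, hkey⟩ := newton_key n f xstar hf hfxs hinv
  refine ⟨ρ, hρ, 2 * M, ?_⟩
  intro xk xk1 wk1 wk hxk hxk1 hwk1 hwk hηlt γ η β lam hγ hη hβ hlam
  have hη0 : 0 ≤ η := by rw [hη]; positivity
  have hη1 : η < 1 := by rw [hη]; exact hηlt
  have hβ0 : 0 ≤ β := by
    rw [hβ]; exact mul_nonneg (le_min hη0 hr0.le) hη0
  have hβ1 : β < 1 := by
    rw [hβ]
    nlinarith [min_le_left η rhat, le_min hη0 hr0.le]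
  set mx := max (‖xk - xstar‖ ^ 2) (‖xk1 - xstar‖ ^ 2) with hmx
  have hmx0 : 0 ≤ mx := le_trans (sq_nonneg _) (le_max_left _ _)
  set v := xk - xk1 + wk1 - wk with hvdef
  have hv : ‖v‖ ≤ 2 * M * mx := by
    have h1 := hkey xk hxk wk1 hwk1
    have h2 := hkey xk1 hxk1 wk hwk
    have heq : v = (wk1 + (xk - xstar)) - (wk + (xk1 - xstar)) := by rw [hvdef]; abel
    rw [heq]
    have hm1 : ‖xk - xstar‖ ^ 2 ≤ mx := le_max_left _ _
    have hm2 : ‖xk1 - xstar‖ ^ 2 ≤ mx := le_max_right _ _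
    calc ‖(wk1 + (xk - xstar)) - (wk + (xk1 - xstar))‖
        ≤ ‖wk1 + (xk - xstar)‖ + ‖wk + (xk1 - xstar)‖ := norm_sub_le _ _
      _ ≤ M * ‖xk - xstar‖ ^ 2 + M * ‖xk1 - xstar‖ ^ 2 := add_le_add h1 h2
      _ ≤ 2 * M * mx := by nlinarith
  have hLHS : ‖(xk + wk1 - (lam * γ) • v) - (xk + wk1)‖ = |lam * γ| * ‖v‖ := by
    have h : (xk + wk1 - (lam * γ) • v) - (xk + wk1) = -((lam * γ) • v) := by abel
    rw [h, norm_neg, norm_smul, Real.norm_eq_abs]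
  have main : ∀ D : ℝ, 0 < D → |lam * γ| * D ≤ β →
      ‖(xk + wk1 - (lam * γ) • v) - (xk + wk1)‖ ≤ 2 * M * (β / D) * mx := by
    intro D hD hle
    rw [hLHS]
    have h1 : |lam * γ| ≤ β / D := (le_div_iff₀ hD).mpr hle
    calc |lam * γ| * ‖v‖ ≤ (β / D) * (2 * M * mx) :=
        mul_le_mul h1 hv (norm_nonneg _) (div_nonneg hβ0 hD.le)
      _ = 2 * M * (β / D) * mx := by ring
  have hsgn3 : Real.sign γ = -1 ∨ Real.sign γ = 0 ∨ Real.sign γ = 1 := by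
    rcases lt_trichotomy γ 0 with h | h | h
    · exact Or.inl (Real.sign_of_neg h)
    · exact Or.inr (Or.inl (by rw [h, Real.sign_zero]))
    · exact Or.inr (Or.inr (Real.sign_of_pos h))
  have hD2 : 0 < 1 + Real.sign γ * β := by
    rcases hsgn3 with h | h | h <;> rw [h] <;> linarith
  have hD1 : 0 < 1 - β := by linarith
  by_cases hcase : γ = 0 ∨ 1 ≤ γ
  · have hlam0 : lam = 0 := by rw [hlam, if_pos hcase]
    constructor
    · intro h; rw [hlam0] at h; norm_num at h
    · intro _
      refine main _ hD2 ?_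
      rw [hlam0]
      simp [hβ0]
  · push_neg at hcase
    obtain ⟨hγ0, hγ1⟩ := hcase
    have hs : Real.sign γ = -1 ∨ Real.sign γ = 1 := by
      rcases lt_trichotomy γ 0 with h | h | h
      · exact Or.inl (Real.sign_of_neg h)
      · exact absurd h hγ0
      · exact Or.inr (Real.sign_of_pos h)
    by_cases h2 : β < |γ| / |1 - γ|
    · have hlamv : lam = β / (γ * (β + Real.sign γ)) := by
        rw [hlam, if_neg (by push_neg; exact ⟨hγ0, hγ1⟩), if_pos h2]
      have hden : β + Real.sign γ ≠ 0 := by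
        rcases hs with h | h <;> rw [h] <;> intro hc <;> linarith
      have hlg : lam * γ = β / (β + Real.sign γ) := by
        rw [hlamv]
        field_simp
      have habs : |lam * γ| = β / (1 + Real.sign γ * β) := by
        rcases hs with h | h <;> rw [hlg, h, abs_div, abs_of_nonneg hβ0]
        · rw [abs_of_neg (by linarith : β + (-1 : ℝ) < 0)]
          ring_nf
        · rw [abs_of_pos (by linarith : (0:ℝ) < β + 1)]
          ring_nf
      constructor
      · intro _
        refine main _ hD1 ?_
        rw [habs]
        rw [div_mul_eq_mul_div, div_le_iff₀ hD2]
        rcases hs with h | h <;> rw [h] <;> nlinarith [sq_nonneg β]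
      · intro _
        refine main _ hD2 ?_
        rw [habs, div_mul_cancel₀ _ (ne_of_gt hD2)]
    · have hlam1 : lam = 1 := by
        rw [hlam, if_neg (by push_neg; exact ⟨hγ0, hγ1⟩), if_neg h2]
      constructor
      · intro _
        refine main _ hD1 ?_
        push_neg at h2
        have habs1γ : |1 - γ| = 1 - γ := abs_of_pos (by linarith)
        rw [habs1γ] at h2
        have hγle : |γ| ≤ β * (1 - γ) := (div_le_iff₀ (by linarith)).mp h2
        rw [hlam1, one_mul]
        nlinarith [abs_nonneg γ, neg_abs_le γ]
      · intro h
        rw [hlam1] at h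
        exact absurd h (lt_irrefl 1)
end

section
/- Let f : ℝⁿ → ℝⁿ be C³ with f(x*) = 0 and f'(x*) nonsingular, and let r̂ ∈ (0,1). Suppose ‖e_k‖ < ‖e_{k−1}‖ and η_{k+1} = ‖w_{k+1}‖/‖w_k‖ < r̂. Then there exist ρ > 0 and constants C₁, C₂ depending only on f such that for x_k, x_{k−1} ∈ B_ρ(x*), the adaptively γ-safeguarded Newton–Anderson iterate x_{k+1} satisfies ‖e_{k+1}‖ ≤ (C₁/(1 − r̂²) + C₂)·‖e_k‖². In particular, adaptive γ-safeguarded Newton–Anderson converges locally quadratically on nonsingular problems. -/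
open scoped RealInnerProductSpace

lemma taylor_bound {n : ℕ} {f : EuclideanSpace ℝ (Fin n) → EuclideanSpace ℝ (Fin n)}
    (hf : Differentiable ℝ f) {s : Set (EuclideanSpace ℝ (Fin n))} (hs : Convex ℝ s)
    {L : NNReal} (hL : LipschitzOnWith L (fderiv ℝ f) s)
    {x y : EuclideanSpace ℝ (Fin n)} (hx : x ∈ s) (hy : y ∈ s) :
    ‖f y - f x - fderiv ℝ f x (y - x)‖ ≤ L * (‖y - x‖ * ‖y - x‖) := by
  have hseg : segment ℝ x y ⊆ s := hs.segment_subset hx hy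
  have hseg2 : segment ℝ x y ⊆ Metric.closedBall x ‖y - x‖ := by
    apply (convex_closedBall x ‖y - x‖).segment_subset
    · simp
    · simp [Metric.mem_closedBall, dist_eq_norm]
  have key := (convex_segment x y).norm_image_sub_le_of_norm_hasFDerivWithin_le'
    (f' := fderiv ℝ f) (φ := fderiv ℝ f x) (C := L * ‖y - x‖)
    (fun z _ => (hf z).hasFDerivAt.hasFDerivWithinAt)
    (fun z hz => by
      have h1 : dist (fderiv ℝ f z) (fderiv ℝ f x) ≤ L * dist z x :=
        hL.dist_le_mul z (hseg hz) x hx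
      have h2 : dist z x ≤ ‖y - x‖ := by
        have := hseg2 hz; simpa [Metric.mem_closedBall] using this
      calc ‖fderiv ℝ f z - fderiv ℝ f x‖ = dist (fderiv ℝ f z) (fderiv ℝ f x) := by
            rw [dist_eq_norm]
      _ ≤ L * dist z x := h1
      _ ≤ L * ‖y - x‖ := mul_le_mul_of_nonneg_left h2 L.2
    ) (left_mem_segment ℝ x y) (right_mem_segment ℝ x y)
  calc ‖f y - f x - fderiv ℝ f x (y - x)‖ ≤ L * ‖y - x‖ * ‖y - x‖ := key
  _ = L * (‖y - x‖ * ‖y - x‖) := by ring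

lemma lamgam_bound (γ β r2 : ℝ) (hβ0 : 0 ≤ β) (hβ : β ≤ r2) (h2 : r2 < 1) (lam : ℝ)
    (hlam : lam = if γ = 0 ∨ 1 ≤ γ then 0
      else if β < |γ| / |1 - γ| then β / (γ * (β + Real.sign γ))
      else 1) :
    |lam * γ| ≤ β / (1 - r2) := by
  have hr2 : 0 < 1 - r2 := by linarith
  have hβ1 : β < 1 := lt_of_le_of_lt hβ h2
  have hβr : β ≤ β / (1 - r2) := by
    rw [le_div_iff₀ hr2]; nlinarith
  by_cases h0 : γ = 0 ∨ 1 ≤ γ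
  · rw [hlam, if_pos h0, zero_mul, abs_zero]; positivity
  · push_neg at h0
    obtain ⟨hγ0, hγ1⟩ := h0
    have hγ1' : γ < 1 := hγ1
    rw [hlam, if_neg (by push_neg; exact ⟨hγ0, hγ1'⟩ )]
    by_cases hc : β < |γ| / |1 - γ|
    · rw [if_pos hc]
      rcases lt_or_gt_of_ne hγ0 with hneg | hpos
      · have hs : Real.sign γ = -1 := Real.sign_of_neg hneg
        rw [hs]
        have hne : β + (-1) ≠ 0 := by intro h; nlinarith
        have : β / (γ * (β + (-1))) * γ = β / (β - 1) := by
          calc β / (γ * (β + (-1))) * γ = γ * β / (γ * (β + (-1))) := by ring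
          _ = β / (β + (-1)) := mul_div_mul_left _ _ hγ0
          _ = β / (β - 1) := by rw [show β + (-1) = β - 1 by ring]
        rw [this, abs_div, abs_of_nonneg hβ0, abs_of_neg (by linarith : β - 1 < 0)]
        rw [div_le_div_iff₀ (by linarith) hr2]
        nlinarith
      · have hs : Real.sign γ = 1 := Real.sign_of_pos hpos
        rw [hs]
        have : β / (γ * (β + 1)) * γ = β / (β + 1) := by
          calc β / (γ * (β + 1)) * γ = γ * β / (γ * (β + 1)) := by ring
          _ = β / (β + 1) := mul_div_mul_left _ _ hγ0
        rw [this, abs_div, abs_of_nonneg hβ0, abs_of_pos (by linarith : (0:ℝ) < β + 1)]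
        rw [div_le_div_iff₀ (by linarith) hr2]
        nlinarith
    · rw [if_neg hc, one_mul]
      push_neg at hc
      have habs : |1 - γ| = 1 - γ := abs_of_pos (by linarith)
      rw [habs] at hc
      have h1γ : (0:ℝ) < 1 - γ := by linarith
      have hc' : |γ| ≤ β * (1 - γ) := by
        rw [div_le_iff₀ h1γ] at hc; linarith
      have hγle : -γ ≤ |γ| := neg_le_abs γ
      rw [le_div_iff₀ hr2]
      nlinarith [abs_nonneg γ]


/-- Corollary 3.5: Let `f : ℝⁿ → ℝⁿ` be `C³` with `f x* = 0` and `f'(x*)`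
nonsingular, and let `r̂ ∈ (0,1)`.  There exist `ρ > 0` and constants `C₁, C₂` depending
only on `f` such that for `x_k, x_{k-1} ∈ B_ρ(x*)` with `‖e_k‖ < ‖e_{k-1}‖` and
`η_{k+1} = ‖w_{k+1}‖/‖w_k‖ < r̂`, the adaptively γ-safeguarded Newton–Anderson iterate
`x_{k+1} = x_k + w_{k+1} − λ_{k+1}γ_{k+1}(x_k − x_{k-1} + w_{k+1} − w_k)` satisfies
`‖e_{k+1}‖ ≤ (C₁/(1 − r̂²) + C₂) ‖e_k‖²`: adaptive γ-safeguarded Newton–Anderson converges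
locally quadratically on nonsingular problems. -/
theorem stmt_10 (n : ℕ) (f : EuclideanSpace ℝ (Fin n) → EuclideanSpace ℝ (Fin n))
    (xstar : EuclideanSpace ℝ (Fin n))
    (hf : ContDiff ℝ 3 f) (hfxs : f xstar = 0)
    (hinv : Function.Bijective (fderiv ℝ f xstar))
    (rhat : ℝ) (hrhat : rhat ∈ Set.Ioo (0 : ℝ) 1) :
    ∃ ρ > (0 : ℝ), ∃ C₁ C₂ : ℝ, ∀ xk xk1 wk1 wk : EuclideanSpace ℝ (Fin n),
      xk ∈ Metric.ball xstar ρ → xk1 ∈ Metric.ball xstar ρ →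
      -- Newton updates
      fderiv ℝ f xk wk1 = -f xk →
      fderiv ℝ f xk1 wk = -f xk1 →
      -- ‖e_k‖ < ‖e_{k-1}‖ and η_{k+1} < r̂
      ‖xk - xstar‖ < ‖xk1 - xstar‖ →
      ‖wk1‖ / ‖wk‖ < rhat →
      ∀ γ η β lam : ℝ,
        γ = ⟪wk1 - wk, wk1⟫ / ‖wk1 - wk‖ ^ 2 →
        η = ‖wk1‖ / ‖wk‖ →
        β = min η rhat * η →
        lam = (if γ = 0 ∨ 1 ≤ γ then 0
          else if β < |γ| / |1 - γ| then β / (γ * (β + Real.sign γ))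
          else 1) →
        ‖(xk + wk1 - (lam * γ) • (xk - xk1 + wk1 - wk)) - xstar‖ ≤
          (C₁ / (1 - rhat ^ 2) + C₂) * ‖xk - xstar‖ ^ 2 := by
  have hf1 : Differentiable ℝ f := hf.differentiable (by norm_num)
  -- antilipschitz constant for A = f'(x*)
  obtain ⟨K, hK1, hKA⟩ : ∃ K : ℝ, 1 ≤ K ∧ ∀ v, ‖v‖ ≤ K * ‖fderiv ℝ f xstar v‖ := by
    let e : EuclideanSpace ℝ (Fin n) ≃L[ℝ] EuclideanSpace ℝ (Fin n) :=
      (LinearEquiv.ofBijective (fderiv ℝ f xstar).toLinearMap hinv).toContinuousLinearEquiv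
    refine ⟨max ‖(e.symm : EuclideanSpace ℝ (Fin n) →L[ℝ] EuclideanSpace ℝ (Fin n))‖ 1,
      le_max_right _ _, fun v => ?_⟩
    have h1 : e v = fderiv ℝ f xstar v := rfl
    calc ‖v‖ = ‖e.symm (e v)‖ := by rw [e.symm_apply_apply]
    _ ≤ ‖(e.symm : EuclideanSpace ℝ (Fin n) →L[ℝ] EuclideanSpace ℝ (Fin n))‖ * ‖e v‖ :=
        (e.symm : EuclideanSpace ℝ (Fin n) →L[ℝ] EuclideanSpace ℝ (Fin n)).le_opNorm (e v)
    _ ≤ _ := by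
        rw [h1]
        exact mul_le_mul_of_nonneg_right (le_max_left _ _) (norm_nonneg _)
  -- local Lipschitz constant for fderiv
  obtain ⟨L, ρ₀, hρ₀, hLip⟩ : ∃ (L : NNReal) (ρ₀ : ℝ), 0 < ρ₀ ∧
      LipschitzOnWith L (fderiv ℝ f) (Metric.ball xstar ρ₀) := by
    have h2 : ContDiffAt ℝ 1 (fderiv ℝ f) xstar :=
      (hf.fderiv_right (by norm_num)).contDiffAt
    obtain ⟨L, t, ht, hL⟩ := h2.exists_lipschitzOnWith
    obtain ⟨ρ₀, hρ₀, hball⟩ := Metric.mem_nhds_iff.mp ht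
    exact ⟨L, ρ₀, hρ₀, hL.mono hball⟩
  have hK0 : (0:ℝ) < K := lt_of_lt_of_le one_pos hK1
  have hL0 : (0:ℝ) ≤ L := L.2
  set ρ : ℝ := min ρ₀ (1 / (4 * (K * L + 1))) with hρdef
  have hρpos : 0 < ρ := lt_min hρ₀ (by positivity)
  have hρsub : Metric.ball xstar ρ ⊆ Metric.ball xstar ρ₀ :=
    Metric.ball_subset_ball (min_le_left _ _)
  have hKLρ : K * L * ρ ≤ 1/4 := by
    have h1 : ρ ≤ 1 / (4 * (K * L + 1)) := min_le_right _ _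
    have h2 : (0:ℝ) < 4 * (K * L + 1) := by positivity
    have h3 : K * L * ρ ≤ (K * L + 1) * (1 / (4 * (K * L + 1))) := by
      apply mul_le_mul (by linarith [mul_nonneg hK0.le hL0]) h1 hρpos.le (by positivity)
    have h4 : (K * L + 1) * (1 / (4 * (K * L + 1))) = 1/4 := by
      field_simp
    linarith
  set CN : ℝ := 2 * K * L with hCNdef
  have hCN0 : 0 ≤ CN := by positivity
  have hCNρ : CN * ρ ≤ 1/2 := by
    have h : CN * ρ = 2 * (K * L * ρ) := by rw [hCNdef]; ring
    linarith
  -- Newton quadratic estimate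
  have newton : ∀ x w : EuclideanSpace ℝ (Fin n), x ∈ Metric.ball xstar ρ →
      fderiv ℝ f x w = -f x → ‖x + w - xstar‖ ≤ CN * ‖x - xstar‖ ^ 2 := by
    intro x w hx hw
    set E : EuclideanSpace ℝ (Fin n) := x + w - xstar with hEdef
    have hxρ₀ : x ∈ Metric.ball xstar ρ₀ := hρsub hx
    have hxs : xstar ∈ Metric.ball xstar ρ₀ := Metric.mem_ball_self hρ₀
    have htay : ‖f xstar - f x - fderiv ℝ f x (xstar - x)‖ ≤
        L * (‖xstar - x‖ * ‖xstar - x‖) :=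
      taylor_bound hf1 (convex_ball _ _) hLip hxρ₀ hxs
    have hAE : fderiv ℝ f x E = f xstar - f x - fderiv ℝ f x (xstar - x) := by
      have h1 : E = (x - xstar) + w := by rw [hEdef]; abel
      rw [h1, map_add, hw, hfxs, show xstar - x = -(x - xstar) by abel, map_neg]
      abel
    have hnx : ‖xstar - x‖ = ‖x - xstar‖ := norm_sub_rev _ _
    have hfE : ‖fderiv ℝ f x E‖ ≤ L * ‖x - xstar‖ ^ 2 := by
      rw [hAE]
      calc ‖f xstar - f x - fderiv ℝ f x (xstar - x)‖ ≤
          L * (‖xstar - x‖ * ‖xstar - x‖) := htay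
      _ = L * ‖x - xstar‖ ^ 2 := by rw [hnx]; ring
    have hdiff : ‖fderiv ℝ f xstar E - fderiv ℝ f x E‖ ≤ L * ‖x - xstar‖ * ‖E‖ := by
      have hop : ‖fderiv ℝ f xstar - fderiv ℝ f x‖ ≤ L * ‖x - xstar‖ := by
        have h := hLip.dist_le_mul xstar hxs x hxρ₀
        rw [dist_eq_norm, dist_eq_norm] at h
        calc ‖fderiv ℝ f xstar - fderiv ℝ f x‖ ≤ L * ‖xstar - x‖ := h
        _ = L * ‖x - xstar‖ := by rw [hnx]
      calc ‖fderiv ℝ f xstar E - fderiv ℝ f x E‖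
          = ‖(fderiv ℝ f xstar - fderiv ℝ f x) E‖ := by
            rw [ContinuousLinearMap.sub_apply]
      _ ≤ ‖fderiv ℝ f xstar - fderiv ℝ f x‖ * ‖E‖ :=
            (fderiv ℝ f xstar - fderiv ℝ f x).le_opNorm E
      _ ≤ L * ‖x - xstar‖ * ‖E‖ := mul_le_mul_of_nonneg_right hop (norm_nonneg _)
    have hE1 : ‖E‖ ≤ K * ‖fderiv ℝ f xstar E‖ := hKA E
    have hE2 : ‖fderiv ℝ f xstar E‖ ≤ ‖fderiv ℝ f x E‖ +
        ‖fderiv ℝ f xstar E - fderiv ℝ f x E‖ := by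
      have h := norm_add_le (fderiv ℝ f x E) (fderiv ℝ f xstar E - fderiv ℝ f x E)
      calc ‖fderiv ℝ f xstar E‖
          = ‖fderiv ℝ f x E + (fderiv ℝ f xstar E - fderiv ℝ f x E)‖ := by
            congr 1; abel
      _ ≤ _ := h
    have hxlt : ‖x - xstar‖ < ρ := by
      rw [Metric.mem_ball, dist_eq_norm] at hx; exact hx
    have hx0 : 0 ≤ ‖x - xstar‖ := norm_nonneg _
    have hE0 : 0 ≤ ‖E‖ := norm_nonneg _
    have hKLx : K * (L * ‖x - xstar‖) ≤ 1/4 := by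
      have h1 : K * (↑L * ‖x - xstar‖) = K * ↑L * ‖x - xstar‖ := by ring
      have h2 : K * ↑L * ‖x - xstar‖ ≤ K * ↑L * ρ :=
        mul_le_mul_of_nonneg_left hxlt.le (by positivity)
      linarith
    have s1 : ‖fderiv ℝ f xstar E‖ ≤ ↑L * ‖x - xstar‖ ^ 2 + ↑L * ‖x - xstar‖ * ‖E‖ :=
      le_trans hE2 (add_le_add hfE hdiff)
    have s2' : ‖E‖ ≤ K * ↑L * ‖x - xstar‖ ^ 2 + K * (↑L * ‖x - xstar‖) * ‖E‖ := by
      calc ‖E‖ ≤ K * (↑L * ‖x - xstar‖ ^ 2 + ↑L * ‖x - xstar‖ * ‖E‖) :=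
            le_trans hE1 (mul_le_mul_of_nonneg_left s1 hK0.le)
      _ = K * ↑L * ‖x - xstar‖ ^ 2 + K * (↑L * ‖x - xstar‖) * ‖E‖ := by ring
    have s4 : K * (↑L * ‖x - xstar‖) * ‖E‖ ≤ (1/4) * ‖E‖ :=
      mul_le_mul_of_nonneg_right hKLx hE0
    have s5 : ‖E‖ ≤ 2 * (K * ↑L * ‖x - xstar‖ ^ 2) := by linarith
    calc ‖E‖ ≤ 2 * (K * ↑L * ‖x - xstar‖ ^ 2) := s5
    _ = CN * ‖x - xstar‖ ^ 2 := by rw [hCNdef]; ring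
  -- choose constants
  refine ⟨ρ, hρpos, 32 * CN, CN, ?_⟩
  intro xk xk1 wk1 wk hxk hxk1 hNk hNk1 hlt hηlt γ η β lam hγ hηdef hβdef hlam
  set ek : ℝ := ‖xk - xstar‖ with hek
  set e1 : ℝ := ‖xk1 - xstar‖ with he1
  have hek0 : 0 ≤ ek := norm_nonneg _
  have he1pos : 0 < e1 := lt_of_le_of_lt hek0 hlt
  have hekρ : ek < ρ := by rw [Metric.mem_ball, dist_eq_norm] at hxk; exact hxk
  have he1ρ : e1 < ρ := by rw [Metric.mem_ball, dist_eq_norm] at hxk1; exact hxk1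
  have hE : ‖xk + wk1 - xstar‖ ≤ CN * ek ^ 2 := newton xk wk1 hxk hNk
  have hE' : ‖xk1 + wk - xstar‖ ≤ CN * e1 ^ 2 := newton xk1 wk hxk1 hNk1
  have hCNek : CN * ek ≤ 1/2 := by
    have := mul_le_mul_of_nonneg_left hekρ.le hCN0
    linarith
  have hCNe1 : CN * e1 ≤ 1/2 := by
    have := mul_le_mul_of_nonneg_left he1ρ.le hCN0
    linarith
  -- upper bound on wk1, lower bound on wk
  have hw1 : ‖wk1‖ ≤ 2 * ek := by
    have h1 : ‖wk1‖ ≤ ‖xk + wk1 - xstar‖ + ek := by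
      calc ‖wk1‖ = ‖(xk + wk1 - xstar) - (xk - xstar)‖ := by
            congr 1; abel
      _ ≤ ‖xk + wk1 - xstar‖ + ‖xk - xstar‖ := norm_sub_le _ _
    have h2 : CN * ek ^ 2 = (CN * ek) * ek := by ring
    have h3 : (CN * ek) * ek ≤ (1/2) * ek := mul_le_mul_of_nonneg_right hCNek hek0
    linarith
  have hwk : e1 / 2 ≤ ‖wk‖ := by
    have h1 : e1 ≤ ‖xk1 + wk - xstar‖ + ‖wk‖ := by
      calc e1 = ‖(xk1 + wk - xstar) - wk‖ := by rw [he1]; congr 1; abel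
      _ ≤ ‖xk1 + wk - xstar‖ + ‖wk‖ := norm_sub_le _ _
    have h2 : CN * e1 ^ 2 = (CN * e1) * e1 := by ring
    have h3 : (CN * e1) * e1 ≤ (1/2) * e1 := mul_le_mul_of_nonneg_right hCNe1 he1pos.le
    linarith
  have hwkpos : 0 < ‖wk‖ := lt_of_lt_of_le (by linarith) hwk
  have hη0 : 0 ≤ η := by rw [hηdef]; positivity
  have hηrhat : η < rhat := by rw [hηdef]; exact hηlt
  have hβval : β = η ^ 2 := by
    rw [hβdef, min_eq_left hηrhat.le]; ring
  have hβ0 : 0 ≤ β := by rw [hβval]; positivity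
  have hβle : β ≤ rhat ^ 2 := by
    rw [hβval]; exact pow_le_pow_left₀ hη0 hηrhat.le 2
  have hr2lt : rhat ^ 2 < 1 := pow_lt_one₀ hrhat.1.le hrhat.2 (by norm_num)
  have hr2pos : 0 < 1 - rhat ^ 2 := by linarith
  have hlg : |lam * γ| ≤ β / (1 - rhat ^ 2) :=
    lamgam_bound γ β (rhat ^ 2) hβ0 hβle hr2lt lam hlam
  -- β e1² ≤ 16 ek²
  have hηe1 : η * e1 ≤ 4 * ek := by
    have h1 : η * ‖wk‖ = ‖wk1‖ := by
      rw [hηdef]; field_simp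
    have h2 : η * (e1 / 2) ≤ η * ‖wk‖ := mul_le_mul_of_nonneg_left hwk hη0
    have h3 : η * (e1 / 2) = (η * e1) / 2 := by ring
    linarith
  have hβe1 : β * e1 ^ 2 ≤ 16 * ek ^ 2 := by
    have h0 : 0 ≤ η * e1 := mul_nonneg hη0 he1pos.le
    have h1 : (η * e1) * (η * e1) ≤ (4 * ek) * (4 * ek) :=
      mul_self_le_mul_self h0 hηe1
    have h2 : β * e1 ^ 2 = (η * e1) * (η * e1) := by rw [hβval]; ring
    have h3 : (16:ℝ) * ek ^ 2 = (4 * ek) * (4 * ek) := by ring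
    linarith
  -- difference of Newton errors
  have hD : ‖xk - xk1 + wk1 - wk‖ ≤ 2 * CN * e1 ^ 2 := by
    have h1 : (xk - xk1 + wk1 - wk : EuclideanSpace ℝ (Fin n)) =
        (xk + wk1 - xstar) - (xk1 + wk - xstar) := by abel
    rw [h1]
    calc ‖(xk + wk1 - xstar) - (xk1 + wk - xstar)‖ ≤
        ‖xk + wk1 - xstar‖ + ‖xk1 + wk - xstar‖ := norm_sub_le _ _
    _ ≤ CN * ek ^ 2 + CN * e1 ^ 2 := add_le_add hE hE'
    _ ≤ 2 * CN * e1 ^ 2 := by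
        have h2 : ek ^ 2 ≤ e1 ^ 2 := pow_le_pow_left₀ hek0 hlt.le 2
        have h3 := mul_le_mul_of_nonneg_left h2 hCN0
        linarith
  -- final assembly
  have hmain : ‖(xk + wk1 - (lam * γ) • (xk - xk1 + wk1 - wk)) - xstar‖ ≤
      ‖xk + wk1 - xstar‖ + |lam * γ| * ‖xk - xk1 + wk1 - wk‖ := by
    have h1 : (xk + wk1 - (lam * γ) • (xk - xk1 + wk1 - wk)) - xstar =
        (xk + wk1 - xstar) - (lam * γ) • (xk - xk1 + wk1 - wk) := by abel
    rw [h1]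
    calc ‖(xk + wk1 - xstar) - (lam * γ) • (xk - xk1 + wk1 - wk)‖ ≤
        ‖xk + wk1 - xstar‖ + ‖(lam * γ) • (xk - xk1 + wk1 - wk)‖ := norm_sub_le _ _
    _ = ‖xk + wk1 - xstar‖ + |lam * γ| * ‖xk - xk1 + wk1 - wk‖ := by
        rw [norm_smul, Real.norm_eq_abs]
  have hsecond : |lam * γ| * ‖xk - xk1 + wk1 - wk‖ ≤ 32 * CN / (1 - rhat ^ 2) * ek ^ 2 := by
    have h1 : |lam * γ| * ‖xk - xk1 + wk1 - wk‖ ≤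
        (β / (1 - rhat ^ 2)) * (2 * CN * e1 ^ 2) :=
      mul_le_mul hlg hD (norm_nonneg _) (by positivity)
    have h2 : (β / (1 - rhat ^ 2)) * (2 * CN * e1 ^ 2) =
        2 * CN * (β * e1 ^ 2) / (1 - rhat ^ 2) := by ring
    have h3 : 2 * CN * (β * e1 ^ 2) / (1 - rhat ^ 2) ≤
        2 * CN * (16 * ek ^ 2) / (1 - rhat ^ 2) := by
      have h5 : 2 * CN * (β * e1 ^ 2) ≤ 2 * CN * (16 * ek ^ 2) :=
        mul_le_mul_of_nonneg_left hβe1 (by positivity)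
      exact div_le_div_of_nonneg_right h5 hr2pos.le
    have h4 : 2 * CN * (16 * ek ^ 2) / (1 - rhat ^ 2) =
        32 * CN / (1 - rhat ^ 2) * ek ^ 2 := by ring
    linarith [h2 ▸ h1, h4 ▸ h3]
  calc ‖(xk + wk1 - (lam * γ) • (xk - xk1 + wk1 - wk)) - xstar‖ ≤
      ‖xk + wk1 - xstar‖ + |lam * γ| * ‖xk - xk1 + wk1 - wk‖ := hmain
  _ ≤ CN * ek ^ 2 + 32 * CN / (1 - rhat ^ 2) * ek ^ 2 := add_le_add hE hsecond
  _ = (32 * CN / (1 - rhat ^ 2) + CN) * ek ^ 2 := by ring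
end

section
/- Let f : ℝⁿ → ℝⁿ be C³ with f(x*) = 0 and f'(x*) nonsingular. Then there exist ρ > 0 and a constant C₁ depending only on f such that for all x_k, x_{k−1} ∈ B_ρ(x*) with x_{k−1} ≠ x*, the ratio of consecutive Newton update norms satisfies η_{k+1} = ‖w_{k+1}‖/‖w_k‖ ≤ C₁·‖e_k‖/‖e_{k−1}‖, where w_{j+1} = −f'(x_j)⁻¹ f(x_j) and e_j = x_j − x*. -/
/-!
Near `x*` the derivative `f' x` stays invertible with a uniformly bounded inverse (inversion of
operators is continuous at isomorphisms) and stays uniformly bounded, while `‖f x‖` is comparable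
to `‖x - x*‖` from both sides because `f x = f'(x*) (x - x*) + o(‖x - x*‖)`. Hence a Newton step
`w` taken at `x` has `‖w‖ ≍ ‖f x‖ ≍ ‖x - x*‖`, i.e. `‖w_{k+1}‖ ≲ ‖e_k‖` and `‖e_{k-1}‖ ≲ ‖w_k‖`,
and dividing the two bounds gives the claim.
-/

open Asymptotics Filter Topology Metric ContinuousLinearMap

lemma div_le_mul_mul_div_of_le_mul {a b c d α β : ℝ} (ha : 0 ≤ a) (hc : 0 < c) (hd : 0 ≤ d)
    (hab : a ≤ α * b) (hcd : c ≤ β * d) : a / d ≤ α * β * (b / c) := by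
  have hd : 0 < d := hd.lt_of_ne <| by rintro rfl; linarith
  rw [div_le_iff₀ hd, mul_div_assoc', div_mul_eq_mul_div, le_div_iff₀ hc]
  calc a * c ≤ α * b * (β * d) := mul_le_mul hab hcd hc.le (ha.trans hab)
    _ = α * β * b * d := by ring

variable {𝕜 : Type*} [NontriviallyNormedField 𝕜]
  {E : Type*} [NormedAddCommGroup E] [NormedSpace 𝕜 E]
  {F : Type*} [NormedAddCommGroup F] [NormedSpace 𝕜 F]

section OperatorFamily

variable {X : Type*} [TopologicalSpace X] {L : X → E →L[𝕜] F} {x₀ : X}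

lemma ContinuousAt.exists_eventually_norm_apply_le (hL : ContinuousAt L x₀) :
    ∃ M, ∀ᶠ x in 𝓝 x₀, ∀ v, ‖L x v‖ ≤ M * ‖v‖ :=
  ⟨‖L x₀‖ + 1, by
    filter_upwards [hL.norm.eventually (gt_mem_nhds (lt_add_one _))] with x hx v
    exact (L x).le_of_opNorm_le hx.le v⟩

lemma ContinuousAt.exists_eventually_norm_le_mul_norm_apply [CompleteSpace E]
    (hL : ContinuousAt L x₀) (hinv : (L x₀).IsInvertible) :
    ∃ K ≥ 0, ∀ᶠ x in 𝓝 x₀, ∀ v, ‖v‖ ≤ K * ‖L x v‖ := by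
  obtain ⟨e, he⟩ := hinv
  have hinvL : ∀ᶠ x in 𝓝 x₀, (L x).IsInvertible := hL (he ▸ e.nhds)
  have hcont : ContinuousAt (fun x ↦ (L x).inverse) x₀ :=
    ContinuousAt.comp (g := inverse) (he ▸ (contDiffAt_map_inverse (n := 0) e).continuousAt) hL
  refine ⟨‖(L x₀).inverse‖ + 1, by positivity, ?_⟩
  filter_upwards [hinvL, hcont.norm.eventually (gt_mem_nhds (lt_add_one _))] with x hx hbound v
  calc ‖v‖ = ‖(L x).inverse (L x v)‖ := by rw [hx.inverse_apply_eq.2 rfl]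
    _ ≤ (‖(L x₀).inverse‖ + 1) * ‖L x v‖ := (L x).inverse.le_of_opNorm_le hbound.le _

end OperatorFamily

variable {f : E → F} {x₀ : E}

lemma DifferentiableAt.exists_eventually_norm_le_of_eq_zero (hd : DifferentiableAt 𝕜 f x₀)
    (hx₀ : f x₀ = 0) : ∃ c, ∀ᶠ x in 𝓝 x₀, ‖f x‖ ≤ c * ‖x - x₀‖ := by
  simpa [hx₀] using hd.isBigO_sub.bound

lemma DifferentiableAt.exists_eventually_norm_sub_le_of_eq_zero (hd : DifferentiableAt 𝕜 f x₀)
    (hinv : (fderiv 𝕜 f x₀).IsInvertible) (hx₀ : f x₀ = 0) :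
    ∃ c ≥ 0, ∀ᶠ x in 𝓝 x₀, ‖x - x₀‖ ≤ c * ‖f x‖ := by
  obtain ⟨e, he⟩ := hinv
  have hequiv : (fun x ↦ f x - f x₀) ~[𝓝 x₀] fun x ↦ e (x - x₀) :=
    (he ▸ hd.hasFDerivAt.isLittleO).trans_isBigO (e.isBigO_sub_rev _ _)
  obtain ⟨c, hc, hbound⟩ := isBigO_iff'.1 ((e.isBigO_sub_rev _ _).trans hequiv.isBigO_symm)
  exact ⟨c, hc.le, by simpa [hx₀] using hbound⟩

lemma exists_eventually_norm_sub_le_newton_step (hd : DifferentiableAt 𝕜 f x₀)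
    (hc : ContinuousAt (fderiv 𝕜 f) x₀) (hinv : (fderiv 𝕜 f x₀).IsInvertible) (hx₀ : f x₀ = 0) :
    ∃ B, ∀ᶠ x in 𝓝 x₀, ∀ w, fderiv 𝕜 f x w = -f x → ‖x - x₀‖ ≤ B * ‖w‖ := by
  obtain ⟨c, hc₀, hcev⟩ := hd.exists_eventually_norm_sub_le_of_eq_zero hinv hx₀
  obtain ⟨M, hMev⟩ := hc.exists_eventually_norm_apply_le
  refine ⟨c * M, ?_⟩
  filter_upwards [hcev, hMev] with x hcx hMx w hw
  calc ‖x - x₀‖ ≤ c * ‖f x‖ := hcx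
    _ = c * ‖fderiv 𝕜 f x w‖ := by rw [hw, norm_neg]
    _ ≤ c * (M * ‖w‖) := by gcongr; exact hMx w
    _ = c * M * ‖w‖ := (mul_assoc _ _ _).symm

variable [CompleteSpace E]

lemma exists_eventually_norm_newton_step_le (hd : DifferentiableAt 𝕜 f x₀)
    (hc : ContinuousAt (fderiv 𝕜 f) x₀) (hinv : (fderiv 𝕜 f x₀).IsInvertible) (hx₀ : f x₀ = 0) :
    ∃ A, ∀ᶠ x in 𝓝 x₀, ∀ w, fderiv 𝕜 f x w = -f x → ‖w‖ ≤ A * ‖x - x₀‖ := by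
  obtain ⟨K, hK, hKev⟩ := hc.exists_eventually_norm_le_mul_norm_apply hinv
  obtain ⟨c, hcev⟩ := hd.exists_eventually_norm_le_of_eq_zero hx₀
  refine ⟨K * c, ?_⟩
  filter_upwards [hKev, hcev] with x hKx hcx w hw
  calc ‖w‖ ≤ K * ‖fderiv 𝕜 f x w‖ := hKx w
    _ = K * ‖f x‖ := by rw [hw, norm_neg]
    _ ≤ K * (c * ‖x - x₀‖) := by gcongr
    _ = K * c * ‖x - x₀‖ := (mul_assoc _ _ _).symm

theorem exists_norm_newton_step_div_le (hd : DifferentiableAt 𝕜 f x₀)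
    (hc : ContinuousAt (fderiv 𝕜 f) x₀) (hinv : (fderiv 𝕜 f x₀).IsInvertible) (hx₀ : f x₀ = 0) :
    ∃ ρ > (0 : ℝ), ∃ C : ℝ, ∀ x y w v : E, x ∈ ball x₀ ρ → y ∈ ball x₀ ρ → y ≠ x₀ →
      fderiv 𝕜 f x w = -f x → fderiv 𝕜 f y v = -f y →
      ‖w‖ / ‖v‖ ≤ C * (‖x - x₀‖ / ‖y - x₀‖) := by
  obtain ⟨A, hA⟩ := exists_eventually_norm_newton_step_le hd hc hinv hx₀
  obtain ⟨B, hB⟩ := exists_eventually_norm_sub_le_newton_step hd hc hinv hx₀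
  obtain ⟨ρ, hρ, hball⟩ := Metric.eventually_nhds_iff_ball.1 (hA.and hB)
  refine ⟨ρ, hρ, A * B, fun x y w v hx hy hne hw hv ↦ ?_⟩
  exact div_le_mul_mul_div_of_le_mul (norm_nonneg _) (norm_pos_iff.2 (sub_ne_zero.2 hne))
    (norm_nonneg _) ((hball x hx).1 w hw) ((hball y hy).2 v hv)

/-- Let `f : ℝⁿ → ℝⁿ` be `C³` with `f x* = 0` and `f'(x*)` nonsingular.
There exist `ρ > 0` and a constant `C₁` depending only on `f` such that for all
`x_k, x_{k-1} ∈ B_ρ(x*)` with `x_{k-1} ≠ x*`, the Newton updates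
`w_{k+1} = −f'(x_k)⁻¹ f(x_k)` and `w_k = −f'(x_{k-1})⁻¹ f(x_{k-1})` satisfy
`η_{k+1} = ‖w_{k+1}‖/‖w_k‖ ≤ C₁ ‖e_k‖/‖e_{k-1}‖`. -/
theorem stmt_11 (n : ℕ) (f : EuclideanSpace ℝ (Fin n) → EuclideanSpace ℝ (Fin n))
    (xstar : EuclideanSpace ℝ (Fin n))
    (hf : ContDiff ℝ 3 f) (hfxs : f xstar = 0)
    (hinv : Function.Bijective (fderiv ℝ f xstar)) :
    ∃ ρ > (0 : ℝ), ∃ C₁ : ℝ, ∀ xk xk1 wk1 wk : EuclideanSpace ℝ (Fin n),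
      xk ∈ Metric.ball xstar ρ → xk1 ∈ Metric.ball xstar ρ →
      xk1 ≠ xstar →
      fderiv ℝ f xk wk1 = -f xk →
      fderiv ℝ f xk1 wk = -f xk1 →
      ‖wk1‖ / ‖wk‖ ≤ C₁ * (‖xk - xstar‖ / ‖xk1 - xstar‖) :=
  exists_norm_newton_step_div_le (hf.differentiable (by norm_num) xstar)
    (hf.continuous_fderiv (by norm_num)).continuousAt
    ⟨(LinearEquiv.ofBijective (fderiv ℝ f xstar : _ →ₗ[ℝ] _) hinv).toContinuousLinearEquiv, rfl⟩
    hfxs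
end
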